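/- The per-sample multinomial NML regret vanishes asymptotically: for every fixed integer L ≥ 1, the sequence (log R(L, n)) / n tends to 0 as n → ∞. -/
import Mathlib


open Finset

/-- The multinomial NML regret `R(L, n)`: the sum over all count vectors
`(h_1, …, h_L)` with `h_1 + ⋯ + h_L = n` of the maximum likelihood
`(n! / (h_1! ⋯ h_L!)) · ∏_v (h_v / n)^{h_v}` (with the convention `0^0 = 1`). -/
noncomputable def regret (L n : ℕ) : ℝ :=
  ∑ h ∈ Finset.Nat.antidiagonalTuple L n,
    (Nat.multinomial Finset.univ h : ℝ) * ∏ v, ((h v : ℝ) / (n : ℝ)) ^ (h v)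

lemma regret_term_nonneg (L n : ℕ) (h : Fin L → ℕ) :
    0 ≤ (Nat.multinomial Finset.univ h : ℝ) * ∏ v, ((h v : ℝ) / (n : ℝ)) ^ (h v) := by
  apply mul_nonneg (by positivity)
  exact Finset.prod_nonneg fun v _ => pow_nonneg (by positivity) _

lemma one_le_regret (L n : ℕ) (hL : 1 ≤ L) : 1 ≤ regret L n := by
  have h0 : Fin L → ℕ := fun v => if v = ⟨0, hL⟩ then n else 0
  set f : Fin L → ℕ := fun v => if v = ⟨0, hL⟩ then n else 0 with hf
  have hmem : f ∈ Finset.Nat.antidiagonalTuple L n := by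
    rw [Finset.Nat.mem_antidiagonalTuple]
    simp [hf]
  have hterm : (Nat.multinomial Finset.univ f : ℝ)
      * ∏ v, ((f v : ℝ) / (n : ℝ)) ^ (f v) = 1 := by
    have hmul : Nat.multinomial Finset.univ f = 1 := by
      have hspec := Nat.multinomial_spec Finset.univ f
      have hsum : ∑ i : Fin L, f i = n := by simp [hf]
      have hprod : ∏ i : Fin L, Nat.factorial (f i) = Nat.factorial n := by
        rw [Finset.prod_eq_single (⟨0, hL⟩ : Fin L)]
        · simp [hf]
        · intro b _ hb; simp [hf, hb]
        · simp
      rw [hsum, hprod] at hspec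
      have := Nat.factorial_pos n
      exact Nat.eq_of_mul_eq_mul_left this (by rw [Nat.mul_one]; exact hspec)
    have hprodR : ∏ v, ((f v : ℝ) / (n : ℝ)) ^ (f v) = 1 := by
      apply Finset.prod_eq_one
      intro v _
      by_cases hv : v = ⟨0, hL⟩
      · subst hv
        simp only [hf, if_pos rfl]
        rcases Nat.eq_zero_or_pos n with hn | hn
        · simp [hn]
        · rw [div_self (by positivity), one_pow]
      · simp [hf, hv]
    rw [hmul, hprodR]
    simp
  calc (1 : ℝ) = (Nat.multinomial Finset.univ f : ℝ)
      * ∏ v, ((f v : ℝ) / (n : ℝ)) ^ (f v) := hterm.symm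
    _ ≤ ∑ h ∈ Finset.Nat.antidiagonalTuple L n,
        (Nat.multinomial Finset.univ h : ℝ) * ∏ v, ((h v : ℝ) / (n : ℝ)) ^ (h v) :=
      Finset.single_le_sum (fun h _ => regret_term_nonneg L n h) hmem
    _ = regret L n := rfl

lemma regret_term_le_one (L n : ℕ) (hn : 1 ≤ n) (h : Fin L → ℕ)
    (hmem : h ∈ Finset.Nat.antidiagonalTuple L n) :
    (Nat.multinomial Finset.univ h : ℝ) * ∏ v, ((h v : ℝ) / (n : ℝ)) ^ (h v) ≤ 1 := by
  have hsum : ∑ i : Fin L, h i = n := Finset.Nat.mem_antidiagonalTuple.mp hmem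
  have hn' : (n : ℝ) ≠ 0 := by positivity
  have key : (∑ i : Fin L, ((h i : ℝ) / n)) ^ n
      = ∑ k ∈ Finset.piAntidiag Finset.univ n,
        (Nat.multinomial Finset.univ k : ℝ) * ∏ i, ((h i : ℝ) / n) ^ (k i) :=
    Finset.sum_pow_eq_sum_piAntidiag Finset.univ (fun i => (h i : ℝ) / n) n
  have hsum1 : (∑ i : Fin L, ((h i : ℝ) / n)) = 1 := by
    rw [← Finset.sum_div]
    rw [div_eq_one_iff_eq hn']
    exact_mod_cast hsum
  have hmem' : h ∈ Finset.piAntidiag (Finset.univ : Finset (Fin L)) n := by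
    rw [Finset.mem_piAntidiag]
    exact ⟨hsum, fun i _ => Finset.mem_univ i⟩
  calc (Nat.multinomial Finset.univ h : ℝ) * ∏ v, ((h v : ℝ) / (n : ℝ)) ^ (h v)
      ≤ ∑ k ∈ Finset.piAntidiag Finset.univ n,
        (Nat.multinomial Finset.univ k : ℝ) * ∏ i, ((h i : ℝ) / n) ^ (k i) := by
        apply Finset.single_le_sum (f := fun k =>
          (Nat.multinomial Finset.univ k : ℝ) * ∏ i, ((h i : ℝ) / n) ^ (k i))
          (fun k _ => ?_) hmem'
        exact mul_nonneg (by positivity)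
          (Finset.prod_nonneg fun v _ => pow_nonneg (by positivity) _)
    _ = 1 := by rw [← key, hsum1, one_pow]

lemma regret_le_pow (L n : ℕ) (hn : 1 ≤ n) :
    regret L n ≤ ((n : ℝ) + 1) ^ L := by
  have hcard : (Finset.Nat.antidiagonalTuple L n).card ≤ (n + 1) ^ L := by
    calc (Finset.Nat.antidiagonalTuple L n).card
        ≤ (Fintype.piFinset fun _ : Fin L => Finset.range (n + 1)).card := by
          apply Finset.card_le_card
          intro h hmem
          have hsum : ∑ i : Fin L, h i = n := Finset.Nat.mem_antidiagonalTuple.mp hmem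
          rw [Fintype.mem_piFinset]
          intro i
          rw [Finset.mem_range, Nat.lt_succ_iff]
          calc h i ≤ ∑ j : Fin L, h j :=
            Finset.single_le_sum (fun j _ => Nat.zero_le _) (Finset.mem_univ i)
          _ = n := hsum
      _ = (n + 1) ^ L := by simp [Fintype.card_piFinset]
  calc regret L n ≤ ∑ _h ∈ Finset.Nat.antidiagonalTuple L n, (1 : ℝ) :=
        Finset.sum_le_sum fun h hmem => regret_term_le_one L n hn h hmem
    _ = (Finset.Nat.antidiagonalTuple L n).card := by simp
    _ ≤ ((n + 1 : ℕ) : ℝ) ^ L := by exact_mod_cast Nat.cast_le.mpr hcard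
    _ = ((n : ℝ) + 1) ^ L := by push_cast; ring

/-- The per-sample multinomial NML regret vanishes asymptotically: for fixed
`L ≥ 1`, `(log R(L, n)) / n → 0` as `n → ∞`. -/
theorem log_regret_div_tendsto_zero (L : ℕ) (hL : 1 ≤ L) :
    Filter.Tendsto (fun n : ℕ => Real.log (regret L n) / (n : ℝ))
      Filter.atTop (nhds 0) := by
  have hub : Filter.Tendsto (fun n : ℕ => (L : ℝ) * (Real.log ((n : ℝ) + 1) / n))
      Filter.atTop (nhds 0) := by
    have h1 : Filter.Tendsto (fun n : ℕ => Real.log ((n : ℝ) + 1) / n)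
        Filter.atTop (nhds 0) := by
      have hlo : (fun n : ℕ => Real.log ((n : ℝ) + 1))
          =o[Filter.atTop] (fun n : ℕ => (n : ℝ)) := by
        have h2 : (fun n : ℕ => Real.log ((n : ℝ) + 1))
            =o[Filter.atTop] (fun n : ℕ => (n : ℝ) + 1) :=
          Real.isLittleO_log_id_atTop.comp_tendsto
            (Filter.tendsto_atTop_add_const_right _ 1 tendsto_natCast_atTop_atTop)
        refine h2.trans_isBigO ?_
        rw [Asymptotics.isBigO_iff]
        refine ⟨2, Filter.eventually_atTop.mpr ⟨1, fun n hn => ?_⟩⟩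
        have h1n : (1 : ℝ) ≤ (n : ℝ) := by exact_mod_cast hn
        simp only [Real.norm_eq_abs]
        rw [abs_of_nonneg (by positivity), abs_of_nonneg (by positivity)]
        linarith
      exact hlo.tendsto_div_nhds_zero
    simpa using h1.const_mul (L : ℝ)
  apply squeeze_zero' (g := fun n : ℕ => (L : ℝ) * (Real.log ((n : ℝ) + 1) / n)) _ _ hub
  · filter_upwards with n
    apply div_nonneg _ (Nat.cast_nonneg n)
    exact Real.log_nonneg (one_le_regret L n hL)
  · filter_upwards [Filter.eventually_atTop.mpr ⟨1, fun n (hn : 1 ≤ n) => hn⟩] with n hn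
    have hnpos : (0 : ℝ) < n := by exact_mod_cast hn
    have hlog : Real.log (regret L n) ≤ (L : ℝ) * Real.log ((n : ℝ) + 1) := by
      calc Real.log (regret L n) ≤ Real.log (((n : ℝ) + 1) ^ L) :=
            Real.log_le_log (by linarith [one_le_regret L n hL]) (regret_le_pow L n hn)
        _ = (L : ℝ) * Real.log ((n : ℝ) + 1) := by
            rw [Real.log_pow]
    rw [div_le_iff₀ hnpos]
    calc Real.log (regret L n) ≤ (L : ℝ) * Real.log ((n : ℝ) + 1) := hlog
      _ = (L : ℝ) * (Real.log ((n : ℝ) + 1) / n) * n := by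
          field_simp
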